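/- arXiv:1607.04989 — 5 statements merged into one kernel-verified Lean document; each statement's English description precedes it below -/
import Mathlib

section
/- Let d ≥ 1 and k ≥ 1, let 𝐒 = {S₁,…,S_N} be a collection of nonempty finite point sets in ℝ^d with weights wᵢ > 0, and take ℱ to be the family of all k-point subsets of ℝ^d (so dist(S,F) = max_{s∈S} min_{f∈F} ‖s−f‖). Then the total sensitivity of 𝐒 satisfies 𝔊 = Σᵢ σ(Sᵢ) ≤ 4k + 3. -/
/-- Max of `f` over a finite set, with value `0` on the empty set. -/
noncomputable def maxVal {α : Type*} (P : Finset α) (f : α → ℝ) : ℝ :=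
  P.fold max 0 f

/-- Generalized distance from a finite point set `S` to a shape `F`:
`max_{s ∈ S} inf_{f ∈ F} ‖s - f‖`. -/
noncomputable def distv {d : ℕ} (S : Finset (EuclideanSpace ℝ (Fin d)))
    (F : Set (EuclideanSpace ℝ (Fin d))) : ℝ :=
  maxVal S (fun x => Metric.infDist x F)

/-!
Fix a set `Fs` of `k` centres whose cost is within a factor 2 of that of every `k`-set, and
attach each `S i` to the centres nearest to its points; let `W` be the smallest total weight of
a cluster that `S i` joins. For every `k`-set `F`, the triangle inequality through such a
centre `c`, together with averaging `dist(c, F)` over the cluster of `c`, gives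
`w i * dist(S i, F) ≤ (2 * w i * dist(S i, Fs) / cost Fs + 3 * w i / W) * cost F`.
The first coefficients sum to `2`; the second sum to at most `3k`, because all sets choosing
the same centre lie in its cluster. A 2-approximate `Fs` exists: either all points fit into `k`
centres, or, by pigeonhole on `k + 1` separated points, the cost of every `k`-set is bounded
below by a positive constant.
-/

open Metric Finset

section MetricFacts

variable {X : Type*} [MetricSpace X]

lemma Finset.exists_pos_le_dist (P : Finset X) :
    ∃ δ > 0, ∀ p ∈ P, ∀ q ∈ P, p ≠ q → δ ≤ dist p q := by
  rcases P.offDiag.eq_empty_or_nonempty with h | h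
  · refine ⟨1, one_pos, fun p hp q hq hpq => ?_⟩
    have : (p, q) ∈ P.offDiag := mem_offDiag.mpr ⟨hp, hq, hpq⟩
    simp [h] at this
  · obtain ⟨⟨u, v⟩, huv, hmin⟩ := P.offDiag.exists_min_image (fun pq => dist pq.1 pq.2) h
    exact ⟨dist u v, dist_pos.mpr (mem_offDiag.mp huv).2.2,
      fun p hp q hq hpq => hmin (p, q) (mem_offDiag.mpr ⟨hp, hq, hpq⟩)⟩

lemma exists_half_le_infDist_of_card_lt {P F : Finset X} {δ : ℝ} (hF : F.Nonempty)
    (hcard : F.card < P.card) (hδ : ∀ p ∈ P, ∀ q ∈ P, p ≠ q → δ ≤ dist p q) :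
    ∃ p ∈ P, δ / 2 ≤ infDist p (F : Set X) := by
  choose φ hφF hφ using F.finite_toSet.isCompact.exists_infDist_eq_dist (by simpa using hF)
  by_contra! hclose
  obtain ⟨p, hp, q, hq, hpq, hφpq⟩ :=
    exists_ne_map_eq_of_card_lt_of_maps_to hcard (fun p _ => hφF p)
  have hp' : dist p (φ q) < δ / 2 := hφpq ▸ hφ p ▸ hclose p hp
  have hq' : dist q (φ q) < δ / 2 := hφ q ▸ hclose q hq
  linarith [hδ p hp q hq hpq, dist_triangle_right p q (φ q)]

end MetricFacts

lemma exists_le_two_mul_of_pos_le {β : Type*} [Nonempty β] (f : β → ℝ) {ε : ℝ}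
    (hε : 0 < ε) (h : ∀ x, ε ≤ f x) : ∃ x, ∀ y, f x ≤ 2 * f y := by
  have hbdd : BddBelow (Set.range f) := ⟨ε, Set.forall_mem_range.mpr h⟩
  have hinf : ε ≤ ⨅ x, f x := le_ciInf h
  obtain ⟨x, hx⟩ := exists_lt_of_ciInf_lt (show ⨅ x, f x < 2 * ⨅ x, f x by linarith)
  exact ⟨x, fun y => hx.le.trans (by linarith [ciInf_le hbdd y])⟩

lemma le_two_mul_div_mul {a A B : ℝ} (ha : 0 ≤ a) (haA : a ≤ A) (hAB : A ≤ 2 * B) :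
    a ≤ 2 * a / A * B := by
  -- for `A = 0` this rests on `a = 0`, as the right side is then `2 * a / 0 * B = 0`
  rcases le_or_gt A 0 with hA | hA
  · rw [le_antisymm (haA.trans hA) ha]; simp
  · rw [div_mul_eq_mul_div, le_div_iff₀ hA]
    nlinarith

lemma sum_div_sum_le_card {ι α : Type*} [Fintype ι] [DecidableEq α] {w : ι → ℝ}
    (hw : ∀ i, 0 ≤ w i) (C : α → Finset ι) (T : Finset α) (m : ι → α)
    (hmT : ∀ i, m i ∈ T) (hmC : ∀ i, i ∈ C (m i)) :
    ∑ i, w i / ∑ j ∈ C (m i), w j ≤ T.card := by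
  rw [← sum_fiberwise_of_maps_to (fun i _ => hmT i), card_eq_sum_ones, Nat.cast_sum]
  refine sum_le_sum fun c _ => ?_
  calc ∑ i with m i = c, w i / ∑ j ∈ C (m i), w j
      = (∑ i with m i = c, w i) / ∑ j ∈ C c, w j := by
        rw [sum_div]
        exact sum_congr rfl fun i hi => by rw [(mem_filter.mp hi).2]
    _ ≤ 1 := by
        refine div_le_one_of_le₀ (sum_le_sum_of_subset_of_nonneg ?_ fun j _ _ => hw j)
          (sum_nonneg fun j _ => hw j)
        intro i hi
        simpa [(mem_filter.mp hi).2] using hmC i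
    _ = _ := by simp

namespace GeneralizedKMedian

variable {d N : ℕ}

local notation "𝔼" n:max => EuclideanSpace ℝ (Fin n)

section Distv

variable {S : Finset (𝔼 d)} {F : Set (𝔼 d)}

lemma infDist_le_distv {s : 𝔼 d} (hs : s ∈ S) : infDist s F ≤ distv S F :=
  (le_fold_max _).mpr (Or.inr ⟨s, hs, le_rfl⟩)

lemma distv_nonneg : 0 ≤ distv S F :=
  (le_fold_max _).mpr (Or.inl le_rfl)

lemma distv_le {M : ℝ} (hM : 0 ≤ M) (h : ∀ s ∈ S, infDist s F ≤ M) : distv S F ≤ M :=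
  (fold_max_le _).mpr ⟨hM, h⟩

lemma exists_distv_eq_infDist (hS : S.Nonempty) : ∃ s ∈ S, distv S F = infDist s F := by
  obtain ⟨s, hs, hmax⟩ := S.exists_max_image (infDist · F) hS
  exact ⟨s, hs, le_antisymm (distv_le infDist_nonneg hmax) (infDist_le_distv hs)⟩

lemma distv_eq_zero_of_subset (h : (S : Set (𝔼 d)) ⊆ F) : distv S F = 0 :=
  le_antisymm (distv_le le_rfl fun _ hs => (infDist_zero_of_mem (h hs)).le) distv_nonneg

end Distv

variable (S : Fin N → Finset (𝔼 d)) (w : Fin N → ℝ)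

noncomputable def cost (F : Set (𝔼 d)) : ℝ := ∑ l, w l * distv (S l) F

noncomputable def sensitivity (k : ℕ) (i : Fin N) : ℝ :=
  sInf {β : ℝ | 0 ≤ β ∧
    ∀ F : Finset (𝔼 d), F.card = k → w i * distv (S i) F ≤ β * cost S w ↑F}

variable {S w}

lemma sensitivity_le {k : ℕ} {i : Fin N} {β : ℝ} (hβ : 0 ≤ β)
    (h : ∀ F : Finset (𝔼 d), F.card = k → w i * distv (S i) F ≤ β * cost S w ↑F) :
    sensitivity S w k i ≤ β :=
  csInf_le ⟨0, fun _ hx => hx.1⟩ ⟨hβ, h⟩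

lemma cost_nonneg (hw : ∀ i, 0 ≤ w i) (F : Set (𝔼 d)) :
    0 ≤ cost S w F :=
  sum_nonneg fun l _ => mul_nonneg (hw l) distv_nonneg

lemma mul_distv_le_cost (hw : ∀ i, 0 ≤ w i) (i : Fin N) (F : Set (𝔼 d)) :
    w i * distv (S i) F ≤ cost S w F :=
  single_le_sum (f := fun l => w l * distv (S l) F)
    (fun l _ => mul_nonneg (hw l) distv_nonneg) (mem_univ i)

section Clustering

variable (S w) (Fs : Finset (𝔼 d))

noncomputable def cluster (c : 𝔼 d) : Finset (Fin N) :=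
  univ.filter fun j => ∃ s ∈ S j, dist s c ≤ distv (S j) Fs

noncomputable def clusterWeight (c : 𝔼 d) : ℝ :=
  ∑ j ∈ cluster S Fs c, w j

variable {S w Fs}

lemma exists_mem_cluster_dist_le (hFs : Fs.Nonempty) {i : Fin N} {s : 𝔼 d}
    (hs : s ∈ S i) : ∃ c ∈ Fs, i ∈ cluster S Fs c ∧ dist s c ≤ distv (S i) Fs := by
  obtain ⟨c, hc, hsc⟩ :=
    Fs.finite_toSet.isCompact.exists_infDist_eq_dist (by simpa using hFs) s
  have hsc' : dist s c ≤ distv (S i) Fs := hsc ▸ infDist_le_distv hs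
  exact ⟨c, hc, mem_filter.mpr ⟨mem_univ i, s, hs, hsc'⟩, hsc'⟩

lemma infDist_le_of_mem_cluster {c : 𝔼 d} {j : Fin N}
    (hj : j ∈ cluster S Fs c) (F : Set (𝔼 d)) :
    infDist c F ≤ distv (S j) Fs + distv (S j) F := by
  obtain ⟨s, hs, hsc⟩ := (mem_filter.mp hj).2
  linarith [infDist_le_infDist_add_dist (s := F) (x := c) (y := s), dist_comm c s,
    infDist_le_distv (F := F) hs]

lemma le_clusterWeight (hw : ∀ i, 0 ≤ w i) {c : 𝔼 d} {i : Fin N}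
    (hi : i ∈ cluster S Fs c) : w i ≤ clusterWeight S w Fs c :=
  single_le_sum (fun j _ => hw j) hi

lemma clusterWeight_mul_infDist_le (hw : ∀ i, 0 ≤ w i) (c : 𝔼 d)
    (F : Set (𝔼 d)) :
    clusterWeight S w Fs c * infDist c F ≤ cost S w Fs + cost S w F := by
  have hterm : ∀ j, 0 ≤ w j * distv (S j) Fs + w j * distv (S j) F := fun j =>
    add_nonneg (mul_nonneg (hw j) distv_nonneg) (mul_nonneg (hw j) distv_nonneg)
  calc clusterWeight S w Fs c * infDist c F = ∑ j ∈ cluster S Fs c, w j * infDist c F :=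
        sum_mul _ _ _
    _ ≤ ∑ j ∈ cluster S Fs c, (w j * distv (S j) Fs + w j * distv (S j) F) :=
        sum_le_sum fun j hj => by
          rw [← mul_add]
          exact mul_le_mul_of_nonneg_left (infDist_le_of_mem_cluster hj F) (hw j)
    _ ≤ ∑ j, (w j * distv (S j) Fs + w j * distv (S j) F) :=
        sum_le_sum_of_subset_of_nonneg (subset_univ _) fun j _ _ => hterm j
    _ = cost S w Fs + cost S w F := sum_add_distrib

lemma sensitivity_le_of_two_approx (hw : ∀ i, 0 < w i) {i : Fin N} (hS : (S i).Nonempty)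
    (hFs : Fs.Nonempty) {k : ℕ}
    (happrox : ∀ F : Finset (𝔼 d), F.card = k →
      cost S w Fs ≤ 2 * cost S w F)
    {c₀ : 𝔼 d} (hc₀ : i ∈ cluster S Fs c₀)
    (hmin : ∀ c ∈ Fs, i ∈ cluster S Fs c →
      clusterWeight S w Fs c₀ ≤ clusterWeight S w Fs c) :
    sensitivity S w k i ≤
      2 * (w i * distv (S i) Fs) / cost S w Fs + 3 * (w i / clusterWeight S w Fs c₀) := by
  have hw' : ∀ i, 0 ≤ w i := fun i => (hw i).le
  have hW : 0 < clusterWeight S w Fs c₀ := (hw i).trans_le (le_clusterWeight hw' hc₀)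
  have hdist : 0 ≤ w i * distv (S i) Fs := mul_nonneg (hw' i) distv_nonneg
  have hcost : 0 ≤ cost S w Fs := cost_nonneg hw' _
  refine sensitivity_le (add_nonneg (div_nonneg (by positivity) hcost)
    (mul_nonneg zero_le_three (div_nonneg (hw' i) hW.le))) fun F hF => ?_
  obtain ⟨s, hs, hsF⟩ := exists_distv_eq_infDist (F := ↑F) hS
  obtain ⟨c, hc, hic, hsc⟩ := exists_mem_cluster_dist_le hFs hs
  have hshare : w i * distv (S i) Fs ≤ 2 * (w i * distv (S i) Fs) / cost S w Fs * cost S w F :=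
    le_two_mul_div_mul hdist (mul_distv_le_cost hw' i _) (happrox F hF)
  have hcenter : clusterWeight S w Fs c₀ * infDist c F ≤ 3 * cost S w F :=
    calc clusterWeight S w Fs c₀ * infDist c F ≤ clusterWeight S w Fs c * infDist c F :=
          mul_le_mul_of_nonneg_right (hmin c hc hic) infDist_nonneg
      _ ≤ cost S w Fs + cost S w F := clusterWeight_mul_infDist_le hw' c F
      _ ≤ 3 * cost S w F := by linarith [happrox F hF]
  have hfar : w i * infDist c F ≤ 3 * (w i / clusterWeight S w Fs c₀) * cost S w F :=
    calc w i * infDist c F = w i / clusterWeight S w Fs c₀ *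
          (clusterWeight S w Fs c₀ * infDist c F) := by field_simp
      _ ≤ w i / clusterWeight S w Fs c₀ * (3 * cost S w F) :=
          mul_le_mul_of_nonneg_left hcenter (by have := hw i; positivity)
      _ = 3 * (w i / clusterWeight S w Fs c₀) * cost S w F := by ring
  have htri : distv (S i) F ≤ distv (S i) Fs + infDist c F := by
    rw [hsF]
    linarith [infDist_le_infDist_add_dist (s := (F : Set (𝔼 d))) (x := s)
      (y := c)]
  calc w i * distv (S i) F ≤ w i * distv (S i) Fs + w i * infDist c F := by
        rw [← mul_add]; exact mul_le_mul_of_nonneg_left htri (hw' i)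
    _ ≤ _ := add_le_add hshare hfar
    _ = _ := by ring

lemma sum_sensitivity_le (hw : ∀ i, 0 < w i) (hS : ∀ i, (S i).Nonempty) (hFs : Fs.Nonempty)
    {k : ℕ} (happrox : ∀ F : Finset (𝔼 d), F.card = k →
      cost S w Fs ≤ 2 * cost S w F) :
    ∑ i, sensitivity S w k i ≤ 3 * Fs.card + 2 := by
  classical
  have hcenters : ∀ i, (Fs.filter (i ∈ cluster S Fs ·)).Nonempty := fun i => by
    obtain ⟨s, hs⟩ := hS i
    obtain ⟨c, hc, hic, -⟩ := exists_mem_cluster_dist_le hFs hs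
    exact ⟨c, mem_filter.mpr ⟨hc, hic⟩⟩
  choose m hm hmin using fun i =>
    (Fs.filter (i ∈ cluster S Fs ·)).exists_min_image (clusterWeight S w Fs) (hcenters i)
  have hshares : ∑ i, 2 * (w i * distv (S i) Fs) / cost S w Fs ≤ 2 := by
    rw [← sum_div, ← mul_sum, mul_div_assoc]
    exact mul_le_of_le_one_right zero_le_two (div_self_le_one _)
  have hclusters : ∑ i, w i / clusterWeight S w Fs (m i) ≤ Fs.card :=
    sum_div_sum_le_card (fun i => (hw i).le) (cluster S Fs) Fs m
      (fun i => (mem_filter.mp (hm i)).1) (fun i => (mem_filter.mp (hm i)).2)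
  calc ∑ i, sensitivity S w k i
      ≤ ∑ i, (2 * (w i * distv (S i) Fs) / cost S w Fs +
          3 * (w i / clusterWeight S w Fs (m i))) :=
        sum_le_sum fun i _ => sensitivity_le_of_two_approx hw (hS i) hFs happrox
          (mem_filter.mp (hm i)).2 fun c hc hic => hmin i c (mem_filter.mpr ⟨hc, hic⟩)
    _ = ∑ i, 2 * (w i * distv (S i) Fs) / cost S w Fs +
          3 * ∑ i, w i / clusterWeight S w Fs (m i) := by
        rw [sum_add_distrib, mul_sum]
    _ ≤ 3 * Fs.card + 2 := by linarith

end Clustering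

lemma exists_pos_le_cost (hw : ∀ i, 0 < w i) {k : ℕ} (P : Finset (𝔼 d))
    (hP : ∀ p ∈ P, ∃ l, p ∈ S l) (hk : k < P.card) :
    ∃ ε > 0, ∀ F : Finset (𝔼 d), F.Nonempty → F.card ≤ k →
      ε ≤ cost S w F := by
  obtain ⟨δ, hδ, hsep⟩ := P.exists_pos_le_dist
  obtain ⟨p₀, hp₀⟩ : P.Nonempty := card_pos.mp (by omega)
  have : Nonempty (Fin N) := ⟨(hP p₀ hp₀).choose⟩
  obtain ⟨l₀, -, hl₀⟩ := univ.exists_min_image w univ_nonempty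
  refine ⟨w l₀ * (δ / 2), by have := hw l₀; positivity, fun F hF hFk => ?_⟩
  obtain ⟨p, hp, hpF⟩ := exists_half_le_infDist_of_card_lt hF (by omega) hsep
  obtain ⟨l, hl⟩ := hP p hp
  calc w l₀ * (δ / 2) ≤ w l * distv (S l) F :=
        mul_le_mul (hl₀ l (mem_univ l)) (hpF.trans (infDist_le_distv hl)) (by positivity)
          (hw l).le
    _ ≤ cost S w F := mul_distv_le_cost (fun i => (hw i).le) l _

lemma exists_two_approx [Nonempty (Fin d)] (hw : ∀ i, 0 < w i) {k : ℕ} (hk : 1 ≤ k) :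
    ∃ Fs : Finset (𝔼 d), Fs.card = k ∧
      ∀ F : Finset (𝔼 d), F.card = k → cost S w Fs ≤ 2 * cost S w F := by
  classical
  set P := univ.biUnion S
  by_cases hPk : P.card ≤ k
  · obtain ⟨F₀, hPF₀, hF₀⟩ := Infinite.exists_superset_card_eq P k hPk
    have hcost : cost S w F₀ = 0 := sum_eq_zero fun l _ => by
      rw [distv_eq_zero_of_subset, mul_zero]
      exact_mod_cast (subset_biUnion_of_mem S (mem_univ l)).trans hPF₀
    exact ⟨F₀, hF₀, fun F _ => hcost ▸ by linarith [cost_nonneg (fun i => (hw i).le) (S := S) F]⟩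
  · obtain ⟨ε, hε, hlow⟩ :=
      exists_pos_le_cost hw P (fun p hp => by simpa [P] using hp) (not_le.mp hPk)
    obtain ⟨F₁, hF₁⟩ := Infinite.exists_subset_card_eq (𝔼 d) k
    have : Nonempty {F : Finset (𝔼 d) // F.card = k} := ⟨⟨F₁, hF₁⟩⟩
    obtain ⟨⟨Fs, hFs⟩, happrox⟩ := exists_le_two_mul_of_pos_le
      (fun F : {F : Finset (𝔼 d) // F.card = k} => cost S w F.1) hε
      fun F => hlow F.1 (card_pos.mp (by omega)) F.2.le
    exact ⟨Fs, hFs, fun F hF => happrox ⟨F, hF⟩⟩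

end GeneralizedKMedian

/-- The total sensitivity of the generalized `k`-median instance (shapes are all
`k`-point subsets of `ℝ^d`) is at most `4k + 3`. -/
theorem stmt4 (d k N : ℕ) (hd : 1 ≤ d) (hk : 1 ≤ k)
    (S : Fin N → Finset (EuclideanSpace ℝ (Fin d))) (w : Fin N → ℝ)
    (hS : ∀ i, (S i).Nonempty) (hw : ∀ i, 0 < w i) :
    (∑ i, sInf {β : ℝ | 0 ≤ β ∧
        ∀ F : Finset (EuclideanSpace ℝ (Fin d)), F.card = k →
          w i * distv (S i) (↑F : Set _) ≤ β * ∑ l, w l * distv (S l) (↑F : Set _)})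
      ≤ 4 * (k : ℝ) + 3 := by
  have : Nonempty (Fin d) := ⟨⟨0, hd⟩⟩
  obtain ⟨Fs, hFs, happrox⟩ := GeneralizedKMedian.exists_two_approx (S := S) hw hk
  have hFs_ne : Fs.Nonempty := card_pos.mp (by omega)
  calc _ = ∑ i, GeneralizedKMedian.sensitivity S w k i := rfl
    _ ≤ 3 * Fs.card + 2 := GeneralizedKMedian.sum_sensitivity_le hw hS hFs_ne happrox
    _ ≤ 4 * (k : ℝ) + 3 := by rw [hFs]; linarith [k.cast_nonneg (α := ℝ)]
end

section
/- Let 0 < ε ≤ 1, let d ≥ 1 and 0 ≤ j ≤ d−1, and let 𝒫 be an existential instance of points s₁,…,sₙ ∈ ℝ^d with probabilities p₁,…,pₙ satisfying Σᵢ pᵢ < ε. Then for every j-flat F in ℝ^d: (1−ε)·Σᵢ pᵢ·d(sᵢ,F) ≤ J(𝒫,F) ≤ Σᵢ pᵢ·d(sᵢ,F). -/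
/-- Expectation over realizations in the existential uncertainty model:
each index `i` is present independently with probability `p i`. -/
noncomputable def expVal {n : ℕ} (p : Fin n → ℝ) (g : Finset (Fin n) → ℝ) : ℝ :=
  ∑ A : Finset (Fin n), (∏ i ∈ A, p i) * (∏ i ∈ Aᶜ, (1 - p i)) * g A

/-- `F` is a `j`-flat: a (nonempty) `j`-dimensional affine subspace of `ℝ^d`. -/
def IsJFlat {d : ℕ} (j : ℕ) (F : Set (EuclideanSpace ℝ (Fin d))) : Prop :=
  F.Nonempty ∧ ∃ W : AffineSubspace ℝ (EuclideanSpace ℝ (Fin d)),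
    (W : Set (EuclideanSpace ℝ (Fin d))) = F ∧ Module.finrank ℝ W.direction = j

/-!
By linearity of expectation `E[∑ i ∈ A, d(sᵢ, F)] = ∑ i, pᵢ d(sᵢ, F)`, so the upper
bound is `max ≤ sum` on each realization `A`. For the lower bound keep only the
realizations with exactly one point: `{i}` occurs with probability
`p i * ∏ k ≠ i, (1 - p k) ≥ p i * (1 - ∑ k, p k) ≥ (1 - ε) * p i`
by the Weierstrass product inequality, and then the maximum is `d(sᵢ, F)`.
-/

open Finset

theorem one_sub_sum_le_prod_one_sub {ι : Type*} (s : Finset ι) (q : ι → ℝ)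
    (h0 : ∀ i ∈ s, 0 ≤ q i) (h1 : ∀ i ∈ s, q i ≤ 1) :
    1 - ∑ i ∈ s, q i ≤ ∏ i ∈ s, (1 - q i) := by
  induction s using Finset.cons_induction with
  | empty => simp
  | cons a t _ ih =>
    simp only [forall_mem_cons] at h0 h1
    rw [sum_cons, prod_cons]
    have hprod := mul_le_mul_of_nonneg_left (ih h0.2 h1.2) (sub_nonneg.mpr h1.1)
    nlinarith [h0.1, sum_nonneg h0.2]

section maxVal

variable {α : Type*} (P : Finset α) (f : α → ℝ)

theorem maxVal_nonneg : 0 ≤ maxVal P f :=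
  (le_fold_max _).mpr (Or.inl le_rfl)

theorem maxVal_le_sum (hf : ∀ i ∈ P, 0 ≤ f i) : maxVal P f ≤ ∑ i ∈ P, f i :=
  (fold_max_le _).mpr ⟨sum_nonneg hf, fun _ hi => single_le_sum hf hi⟩

theorem maxVal_singleton {a : α} (ha : 0 ≤ f a) : maxVal {a} f = f a := by
  rw [maxVal, fold_singleton, max_eq_left ha]

end maxVal

section expVal

variable {n : ℕ} (p : Fin n → ℝ)

noncomputable def realizationProb (A : Finset (Fin n)) : ℝ :=
  (∏ i ∈ A, p i) * ∏ i ∈ Aᶜ, (1 - p i)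

theorem expVal_eq_sum (g : Finset (Fin n) → ℝ) :
    expVal p g = ∑ A, realizationProb p A * g A := rfl

theorem realizationProb_nonneg (hp0 : ∀ i, 0 ≤ p i) (hp1 : ∀ i, p i ≤ 1)
    (A : Finset (Fin n)) : 0 ≤ realizationProb p A :=
  mul_nonneg (prod_nonneg fun i _ => hp0 i) (prod_nonneg fun i _ => sub_nonneg.mpr (hp1 i))

/-- Expanding `∏ k, (p k + q k)`, where `q` is `1 - p` with the factor at `i` replaced
by `0`, kills exactly the realizations that miss `i`. -/
theorem sum_realizationProb_filter_mem (i : Fin n) :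
    ∑ A with i ∈ A, realizationProb p A = p i := by
  set q : Fin n → ℝ := fun k => if k = i then 0 else 1 - p k
  have hq : ∀ A : Finset (Fin n),
      ∏ k ∈ univ \ A, q k = if i ∈ A then ∏ k ∈ Aᶜ, (1 - p k) else 0 := by
    intro A
    split_ifs with hiA
    · rw [← compl_eq_univ_sdiff]
      refine prod_congr rfl fun k hk => ?_
      have hki : k ≠ i := fun h => (mem_compl.mp hk) (h ▸ hiA)
      simp [q, hki]
    · exact prod_eq_zero (by simpa using hiA) (by simp [q])
  calc ∑ A with i ∈ A, realizationProb p A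
      = ∑ A ∈ univ.powerset, (∏ k ∈ A, p k) * ∏ k ∈ univ \ A, q k := by
        simp_rw [powerset_univ, sum_filter, hq, mul_ite, mul_zero, realizationProb]
    _ = ∏ k, (p k + q k) := (prod_add _ _ _).symm
    _ = p i := by
        have : ∀ k, p k + q k = if k = i then p i else 1 := by
          intro k; by_cases hk : k = i <;> simp [q, hk]
        simp [this]

theorem expVal_sum (f : Fin n → ℝ) :
    expVal p (fun A => ∑ i ∈ A, f i) = ∑ i, p i * f i := by
  calc expVal p (fun A => ∑ i ∈ A, f i)
      = ∑ A, ∑ i, if i ∈ A then realizationProb p A * f i else 0 := by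
        rw [expVal_eq_sum]
        refine sum_congr rfl fun A _ => ?_
        rw [sum_ite_mem, univ_inter, mul_sum]
    _ = ∑ i, (∑ A with i ∈ A, realizationProb p A) * f i := by
        rw [sum_comm]
        simp_rw [sum_mul, sum_filter]
    _ = ∑ i, p i * f i := by
        simp_rw [sum_realizationProb_filter_mem]

theorem expVal_mono (hp0 : ∀ i, 0 ≤ p i) (hp1 : ∀ i, p i ≤ 1)
    {g h : Finset (Fin n) → ℝ} (hgh : ∀ A, g A ≤ h A) : expVal p g ≤ expVal p h :=
  sum_le_sum fun A _ => mul_le_mul_of_nonneg_left (hgh A) (realizationProb_nonneg p hp0 hp1 A)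

theorem one_sub_sum_mul_le_realizationProb_singleton (hp0 : ∀ i, 0 ≤ p i)
    (hp1 : ∀ i, p i ≤ 1) (i : Fin n) :
    (1 - ∑ k, p k) * p i ≤ realizationProb p {i} := by
  have hsub : ∑ k ∈ {i}ᶜ, p k ≤ ∑ k, p k :=
    sum_le_sum_of_subset_of_nonneg (subset_univ _) fun k _ _ => hp0 k
  have hprod := one_sub_sum_le_prod_one_sub {i}ᶜ p (fun k _ => hp0 k) fun k _ => hp1 k
  rw [realizationProb, prod_singleton, mul_comm]
  exact mul_le_mul_of_nonneg_left (by linarith) (hp0 i)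

theorem one_sub_sum_mul_le_expVal (hp0 : ∀ i, 0 ≤ p i) (hp1 : ∀ i, p i ≤ 1)
    (g : Finset (Fin n) → ℝ) (hg : ∀ A, 0 ≤ g A) :
    (1 - ∑ i, p i) * ∑ i, p i * g {i} ≤ expVal p g := by
  let singletonEmb : Fin n ↪ Finset (Fin n) := ⟨singleton, singleton_injective⟩
  calc (1 - ∑ i, p i) * ∑ i, p i * g {i} = ∑ i, (1 - ∑ k, p k) * p i * g {i} := by
        simp_rw [mul_sum, mul_assoc]
    _ ≤ ∑ i, realizationProb p {i} * g {i} := sum_le_sum fun i _ =>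
        mul_le_mul_of_nonneg_right
          (one_sub_sum_mul_le_realizationProb_singleton p hp0 hp1 i) (hg _)
    _ = ∑ A ∈ univ.map singletonEmb, realizationProb p A * g A := by
        rw [sum_map]; rfl
    _ ≤ expVal p g := sum_le_sum_of_subset_of_nonneg (subset_univ _) fun A _ _ =>
        mul_nonneg (realizationProb_nonneg p hp0 hp1 A) (hg A)

end expVal

theorem stmt5_general (d j n : ℕ)
    (ε : ℝ)
    (s : Fin n → EuclideanSpace ℝ (Fin d)) (p : Fin n → ℝ)
    (hp0 : ∀ i, 0 ≤ p i) (hp1 : ∀ i, p i ≤ 1)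
    (hsum : (∑ i, p i) < ε) :
    ∀ F : Set (EuclideanSpace ℝ (Fin d)), IsJFlat j F →
      (1 - ε) * (∑ i, p i * Metric.infDist (s i) F) ≤
        expVal p (fun A => maxVal A (fun i => Metric.infDist (s i) F)) ∧
      expVal p (fun A => maxVal A (fun i => Metric.infDist (s i) F)) ≤
        (∑ i, p i * Metric.infDist (s i) F) := by
  intro F _
  have hdist : ∀ i, 0 ≤ Metric.infDist (s i) F := fun i => Metric.infDist_nonneg
  constructor
  · calc (1 - ε) * ∑ i, p i * Metric.infDist (s i) F
        ≤ (1 - ∑ i, p i) * ∑ i, p i * maxVal {i} (fun i => Metric.infDist (s i) F) := by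
          simp only [fun i => maxVal_singleton (fun i => Metric.infDist (s i) F) (hdist i)]
          gcongr
          exact sum_nonneg fun i _ => mul_nonneg (hp0 i) (hdist i)
      _ ≤ _ := one_sub_sum_mul_le_expVal p hp0 hp1 _ fun A => maxVal_nonneg A _
  · calc _ ≤ expVal p (fun A => ∑ i ∈ A, Metric.infDist (s i) F) :=
          expVal_mono p hp0 hp1 fun A => maxVal_le_sum A _ fun i _ => hdist i
      _ = _ := expVal_sum p _

theorem stmt5 (d j n : ℕ) (hd : 1 ≤ d) (hj : j + 1 ≤ d)
    (ε : ℝ) (hε0 : 0 < ε) (hε1 : ε ≤ 1)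
    (s : Fin n → EuclideanSpace ℝ (Fin d)) (p : Fin n → ℝ)
    (hp0 : ∀ i, 0 ≤ p i) (hp1 : ∀ i, p i ≤ 1)
    (hsum : (∑ i, p i) < ε) :
    ∀ F : Set (EuclideanSpace ℝ (Fin d)), IsJFlat j F →
      (1 - ε) * (∑ i, p i * Metric.infDist (s i) F) ≤
        expVal p (fun A => maxVal A (fun i => Metric.infDist (s i) F)) ∧
      expVal p (fun A => maxVal A (fun i => Metric.infDist (s i) F)) ≤
        (∑ i, p i * Metric.infDist (s i) F) :=
  stmt5_general d j n ε s p hp0 hp1 hsum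
end

section
/- Let n ≥ 1, let p₁,…,pₙ ∈ [0,1], and let 0 ≤ d₁ ≤ d₂ ≤ … ≤ dₙ be real numbers. Then Σ_{A⊆{1,…,n}} (∏_{i∈A} pᵢ)(∏_{i∉A}(1−pᵢ))·(max_{i∈A} dᵢ) = Σ_{i=1}^{n} pᵢ·dᵢ·∏_{j>i}(1−p_j), where the maximum over the empty set is taken to be 0. -/
/-!
Sort the realizations by their maximal element. The sets `A` with `max A = i` are exactly the
sets `insert i B` with `B ⊆ Iio i`, so their total weight is `p i * ∏ j > i, (1 - p j)` times
`∑ B ⊆ Iio i, ∏ B p * ∏ (Iio i \ B) (1 - p) = ∏ j < i, (p j + (1 - p j)) = 1`.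
For monotone nonnegative `d` the maximum over a nonempty `A` is `d (max A)`.
-/

open Finset

lemma sum_powerset_prod_mul_prod_sdiff_one_sub {α : Type*} [DecidableEq α]
    (p : α → ℝ) (s : Finset α) :
    ∑ B ∈ s.powerset, (∏ k ∈ B, p k) * ∏ k ∈ s \ B, (1 - p k) = 1 := by
  rw [← prod_add]
  simp

section LinearOrder

variable {α : Type*} [LinearOrder α]

lemma maxVal_eq_apply_max' {f : α → ℝ} (hf0 : ∀ i, 0 ≤ f i) (hf : Monotone f)
    {A : Finset α} (hA : A.Nonempty) : maxVal A f = f (A.max' hA) :=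
  le_antisymm ((fold_max_le _).2 ⟨hf0 _, fun _ hi => hf (le_max' A _ hi)⟩)
    ((le_fold_max _).2 (Or.inr ⟨_, max'_mem A hA, le_rfl⟩))

lemma maxVal_eq_sum_ite [Fintype α] {f : α → ℝ} (hf0 : ∀ i, 0 ≤ f i) (hf : Monotone f)
    (A : Finset α) : maxVal A f = ∑ i : α, if A.max = i then f i else 0 := by
  rcases A.eq_empty_or_nonempty with rfl | hA
  · simp [maxVal]
  · simp [← coe_max' hA, maxVal_eq_apply_max' hf0 hf hA]

lemma max_eq_coe_iff {A : Finset α} {i : α} : A.max = i ↔ i ∈ A ∧ ∀ j ∈ A, j ≤ i :=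
  ⟨fun h => ⟨mem_of_max h, fun _ hj => le_max_of_eq hj h⟩,
    fun ⟨hi, hle⟩ => le_antisymm (Finset.max_le fun j hj => WithBot.coe_le_coe.2 (hle j hj))
      (le_max hi)⟩

variable [Fintype α] [LocallyFiniteOrderBot α]

lemma filter_max_eq_coe_eq_image_insert (i : α) :
    ({A | A.max = (i : WithBot α)} : Finset (Finset α)) = (Iio i).powerset.image (insert i) := by
  ext A
  simp only [mem_filter_univ, mem_image, mem_powerset, max_eq_coe_iff]
  constructor
  · rintro ⟨hi, hle⟩
    exact ⟨A.erase i, fun j hj => mem_Iio.2 ((hle j (mem_of_mem_erase hj)).lt_of_ne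
      (ne_of_mem_erase hj)), insert_erase hi⟩
  · rintro ⟨B, hB, rfl⟩
    refine ⟨mem_insert_self i B, fun j hj => ?_⟩
    rcases mem_insert.1 hj with rfl | hj
    exacts [le_rfl, (mem_Iio.1 (hB hj)).le]

variable [LocallyFiniteOrderTop α]

lemma compl_insert_of_subset_Iio {i : α} {B : Finset α} (hB : B ⊆ Iio i) :
    (insert i B)ᶜ = (Iio i \ B) ∪ Ioi i := by
  ext k
  have hk := @hB k
  simp only [mem_compl, mem_insert, mem_union, mem_sdiff, mem_Iio, mem_Ioi] at *
  grind

lemma sum_filter_max_eq_coe_prod_mul_prod_compl (p : α → ℝ) (i : α) :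
    ∑ A with A.max = (i : WithBot α), (∏ k ∈ A, p k) * ∏ k ∈ Aᶜ, (1 - p k) =
      p i * ∏ j ∈ Ioi i, (1 - p j) := by
  have hi {B : Finset α} (hB : B ⊆ Iio i) : i ∉ B := fun h => lt_irrefl i (mem_Iio.1 (hB h))
  have hinj : Set.InjOn (insert i) ((Iio i).powerset : Set (Finset α)) := fun B hB C hC h => by
    rw [← erase_insert (hi (mem_powerset.1 hB)), h, erase_insert (hi (mem_powerset.1 hC))]
  rw [filter_max_eq_coe_eq_image_insert, sum_image hinj]
  calc _ = ∑ B ∈ (Iio i).powerset, p i * (∏ j ∈ Ioi i, (1 - p j)) *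
          ((∏ k ∈ B, p k) * ∏ k ∈ Iio i \ B, (1 - p k)) := by
        refine sum_congr rfl fun B hB => ?_
        have hB := mem_powerset.1 hB
        have hdisj : Disjoint (Iio i \ B) (Ioi i) :=
          disjoint_left.2 fun k hk hk' => (mem_Iio.1 (mem_sdiff.1 hk).1).not_gt (mem_Ioi.1 hk')
        rw [prod_insert (hi hB), compl_insert_of_subset_Iio hB, prod_union hdisj]
        ring
    _ = _ := by rw [← mul_sum, sum_powerset_prod_mul_prod_sdiff_one_sub, mul_one]

end LinearOrder

theorem stmt6_general (n : ℕ) (p : Fin n → ℝ)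
    (dv : Fin n → ℝ) (hd0 : ∀ i, 0 ≤ dv i) (hmono : Monotone dv) :
    expVal p (fun A => maxVal A dv) =
      ∑ i, p i * dv i * ∏ j ∈ Finset.Ioi i, (1 - p j) := by
  simp_rw [expVal, maxVal_eq_sum_ite hd0 hmono, mul_sum, mul_ite, mul_zero]
  rw [sum_comm]
  refine sum_congr rfl fun i _ => ?_
  rw [← sum_filter, ← sum_mul, sum_filter_max_eq_coe_prod_mul_prod_compl]
  ring

theorem stmt6 (n : ℕ) (hn : 1 ≤ n) (p : Fin n → ℝ)
    (hp0 : ∀ i, 0 ≤ p i) (hp1 : ∀ i, p i ≤ 1)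
    (dv : Fin n → ℝ) (hd0 : ∀ i, 0 ≤ dv i) (hmono : Monotone dv) :
    expVal p (fun A => maxVal A dv) =
      ∑ i, p i * dv i * ∏ j ∈ Finset.Ioi i, (1 - p j) :=
  stmt6_general n p dv hd0 hmono
end

section
/- There is a universal constant C > 0 such that the following holds. Let d ≥ 2 and 1 ≤ j ≤ d−1, and let s₁,…,sₙ ∈ ℝ^d be points with weights wᵢ > 0. For each i define σ(sᵢ) = inf{β ≥ 0 : wᵢ·d(sᵢ,F) ≤ β·Σ_{l=1}^n w_l·d(s_l,F) for every j-flat F in ℝ^d}. Then Σᵢ σ(sᵢ) ≤ C·j^{3/2}. -/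
/-!
If the points lie on a `k`-flat, the vectors `(w l * a (s l))_l`, for `a` affine, form a subspace
of `ℝⁿ` of dimension at most `k + 1`. An Auerbach basis of it for the `ℓ₁` norm gives `tᵢ ≥ 0`
with `∑ tᵢ ≤ k + 1` and `|w i * a (s i)| ≤ tᵢ * ∑ l, |w l * a (s l)|` for every affine `a`.
For a flat `F` and a point `p`, `a q = ⟪u, q - π_F q⟫` with `u` the unit vector along `p - π_F p`
has `a p = d(p, F)` and `|a| ≤ d(·, F)`, so the `tᵢ` bound the sensitivities for all flats.

In general, let `F₁` be a `j`-flat whose cost is at most twice the cost of every `j`-flat, and let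
`pᵢ` be the projection of `sᵢ` onto `F₁`. By the triangle inequality
`σ(sᵢ) ≤ 2 wᵢ d(sᵢ, F₁) / cost F₁ + 3 tᵢ(p)`, hence `∑ σ(sᵢ) ≤ 3 (j + 1) + 2 ≤ 8 j^{3/2}`.
Such an `F₁` with positive cost exists unless the points lie on a `j`-flat: if their affine span
`U` has dimension `> j`, every `j`-flat is orthogonal to a unit vector `u ∈ U`, and since
`u ↦ (⟪u, s l - s m⟫)_{l,m}` is injective on `U`, some point stays at a distance from the flat
bounded below independently of the flat.
-/

open Module Metric
open scoped RealInnerProductSpace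

theorem exists_basis_norm_le_one_abs_coord_le_norm (V : Type*) [NormedAddCommGroup V]
    [NormedSpace ℝ V] [FiniteDimensional ℝ V] :
    ∃ b : Basis (Fin (finrank ℝ V)) ℝ V, (∀ k, ‖b k‖ ≤ 1) ∧ ∀ k x, |b.coord k x| ≤ ‖x‖ := by
  classical
  set e := finBasis ℝ V
  set K : Set (Fin (finrank ℝ V) → V) := Set.univ.pi fun _ => closedBall 0 1
  have hcont : Continuous fun v => |e.det v| := by
    simp_rw [e.det_apply]
    refine (Continuous.matrix_det ?_).abs
    exact continuous_matrix fun i j =>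
      ((e.coord i).continuous_of_finiteDimensional).comp (continuous_apply j)
  set v₀ : Fin (finrank ℝ V) → V := fun k => ‖e k‖⁻¹ • e k
  have hv₀K : v₀ ∈ K := fun k _ => by
    simp [v₀, norm_smul, inv_mul_cancel₀ (norm_ne_zero_iff.2 (e.ne_zero k))]
  have hv₀ : e.det v₀ ≠ 0 := by
    simp [v₀, AlternatingMap.map_smul_univ, e.det_self, Finset.prod_eq_zero_iff, e.ne_zero]
  obtain ⟨v, hvK, hmax⟩ := (isCompact_univ_pi fun _ => isCompact_closedBall (0 : V) 1)
    |>.exists_isMaxOn ⟨v₀, hv₀K⟩ hcont.continuousOn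
  have hv : e.det v ≠ 0 := fun h => hv₀ (abs_nonpos_iff.1 (by simpa [h] using hmax hv₀K))
  -- A family maximising `|det|` on the unit ball is a basis with coordinates bounded by `1`:
  -- replacing `v k` by `x` multiplies the determinant by the `k`-th coordinate of `x` (Cramer).
  obtain ⟨hli, hsp⟩ := (e.is_basis_iff_det).2 (isUnit_iff_ne_zero.2 hv)
  refine ⟨Basis.mk hli hsp.ge, fun k => by simpa using hvK k trivial, fun k x => ?_⟩
  have hcoord : ∀ x, e.det v * (Basis.mk hli hsp.ge).coord k x = e.det (Function.update v k x) :=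
    fun x => by simpa using congrArg (· x) (e.det_smul_mk_coord_eq_det_update hli hsp.ge k)
  rcases eq_or_ne x 0 with rfl | hx
  · rw [map_zero, abs_zero, norm_zero]
  have hxK : Function.update v k (‖x‖⁻¹ • x) ∈ K := by
    intro l _
    rcases eq_or_ne l k with rfl | hl
    · simp [norm_smul, inv_mul_cancel₀ (norm_ne_zero_iff.2 hx)]
    · simpa [hl] using hvK l trivial
  have hle := hmax hxK
  simp only [Set.mem_ofPred_eq, ← hcoord, abs_mul] at hle
  have h1 := (mul_le_iff_le_one_right (abs_pos.2 hv)).1 hle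
  rwa [map_smul, smul_eq_mul, abs_mul, abs_inv, abs_norm,
    inv_mul_le_iff₀ (norm_pos_iff.2 hx), mul_one] at h1

theorem PiLp.exists_sum_le_finrank_abs_le_mul_norm {ι : Type*} [Fintype ι]
    (S : Submodule ℝ (PiLp 1 fun _ : ι => ℝ)) :
    ∃ t : ι → ℝ, (∀ i, 0 ≤ t i) ∧ ∑ i, t i ≤ finrank ℝ S ∧
      ∀ x ∈ S, ∀ i, |x i| ≤ t i * ‖x‖ := by
  obtain ⟨b, hb, hcoord⟩ := exists_basis_norm_le_one_abs_coord_le_norm S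
  refine ⟨fun i => ∑ k, |(b k : PiLp 1 fun _ : ι => ℝ) i|,
    fun i => Finset.sum_nonneg fun _ _ => abs_nonneg _, ?_, fun x hx i => ?_⟩
  · calc ∑ i, ∑ k, |(b k : PiLp 1 fun _ : ι => ℝ) i|
        = ∑ k, ‖b k‖ := by rw [Finset.sum_comm]; simp [PiLp.norm_eq_of_L1]
      _ ≤ ∑ _k, (1 : ℝ) := Finset.sum_le_sum fun k _ => hb k
      _ = finrank ℝ S := by simp
  · have hx' : x = ∑ k, b.coord k ⟨x, hx⟩ • (b k : PiLp 1 fun _ : ι => ℝ) := by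
      have := congrArg Subtype.val (b.sum_repr ⟨x, hx⟩)
      push_cast at this
      exact this.symm
    calc |x i| = |∑ k, b.coord k ⟨x, hx⟩ * (b k : PiLp 1 fun _ : ι => ℝ) i| := by
          conv_lhs => rw [hx']
          simp
      _ ≤ ∑ k, |b.coord k ⟨x, hx⟩| * |(b k : PiLp 1 fun _ : ι => ℝ) i| := by
          simp only [← abs_mul]
          exact Finset.abs_sum_le_sum_abs _ _
      _ ≤ ∑ k, ‖x‖ * |(b k : PiLp 1 fun _ : ι => ℝ) i| := by
          gcongr with k
          exact hcoord k ⟨x, hx⟩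
      _ = (∑ k, |(b k : PiLp 1 fun _ : ι => ℝ) i|) * ‖x‖ := by rw [Finset.sum_mul]; ring_nf

theorem exists_sum_le_finrank_vectorSpan_abs_affineMap_le {ι V P : Type*} [Fintype ι]
    [AddCommGroup V] [Module ℝ V] [AddTorsor V P] (w : ι → ℝ) (s : ι → P) :
    ∃ t : ι → ℝ, (∀ i, 0 ≤ t i) ∧ ∑ i, t i ≤ finrank ℝ (vectorSpan ℝ (Set.range s)) + 1 ∧
      ∀ (a : P →ᵃ[ℝ] ℝ) i, |w i * a (s i)| ≤ t i * ∑ l, |w l * a (s l)| := by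
  rcases isEmpty_or_nonempty ι with hι | ⟨⟨i₀⟩⟩
  · exact ⟨0, fun _ => le_rfl, by simp; positivity, fun _ i => isEmptyElim i⟩
  set W := vectorSpan ℝ (Set.range s)
  have hmem : ∀ l, s l -ᵥ s i₀ ∈ W := fun l =>
    vsub_mem_vectorSpan ℝ (Set.mem_range_self l) (Set.mem_range_self i₀)
  -- `Ψ (g, c)` lists the weighted values of the affine map `s i₀ + q ↦ g q + c` at the points
  let Ψ : (Dual ℝ W × ℝ) →ₗ[ℝ] PiLp 1 fun _ : ι => ℝ :=
    { toFun := fun z => WithLp.toLp 1 fun l => w l * (z.1 ⟨_, hmem l⟩ + z.2)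
      map_add' := fun z z' => by ext l; simp; ring
      map_smul' := fun c z => by ext l; simp; ring }
  obtain ⟨t, ht0, hsum, ht⟩ := PiLp.exists_sum_le_finrank_abs_le_mul_norm (LinearMap.range Ψ)
  refine ⟨t, ht0, hsum.trans ?_, fun a i => ?_⟩
  · have := LinearMap.finrank_range_le Ψ
    rw [finrank_prod, Subspace.dual_finrank_eq, finrank_self] at this
    exact_mod_cast this
  have hΨ : Ψ (a.linear ∘ₗ W.subtype, a (s i₀)) = WithLp.toLp 1 fun l => w l * a (s l) := by
    ext l
    simp [Ψ, AffineMap.linearMap_vsub]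
  simpa [hΨ, PiLp.norm_eq_of_L1] using ht _ ⟨_, hΨ⟩ i

theorem exists_affineMap_eq_infDist_abs_le {V P : Type*} [NormedAddCommGroup V]
    [InnerProductSpace ℝ V] [MetricSpace P] [NormedAddTorsor V P] (F : AffineSubspace ℝ P)
    [Nonempty F] [F.direction.HasOrthogonalProjection] (p : P) :
    ∃ a : P →ᵃ[ℝ] ℝ, a p = infDist p F ∧ ∀ q, |a q| ≤ infDist q F := by
  set r : P →ᵃ[ℝ] V :=
    AffineMap.id ℝ P -ᵥ F.subtype.comp (EuclideanGeometry.orthogonalProjection F).toAffineMap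
  have hr : ∀ q, ‖r q‖ = infDist q F := fun q => by
    simp [r, ← dist_eq_norm_vsub, EuclideanGeometry.dist_orthogonalProjection_eq_infDist]
  set u : V := ‖r p‖⁻¹ • r p
  refine ⟨(innerSL ℝ u).toLinearMap.toAffineMap.comp r, ?_, fun q => ?_⟩
  · change inner ℝ u (r p) = _
    rw [← hr, real_inner_smul_left, real_inner_self_eq_norm_sq, sq, ← mul_assoc,
      inv_mul_mul_self]
  · have hu : ‖u‖ ≤ 1 := by
      rw [norm_smul, norm_inv, norm_norm]
      exact inv_mul_le_one
    calc |inner ℝ u (r q)| ≤ ‖u‖ * ‖r q‖ := abs_real_inner_le_norm _ _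
      _ ≤ ‖r q‖ := mul_le_of_le_one_left (norm_nonneg _) hu
      _ = infDist q F := hr q

theorem abs_inner_vsub_le_norm_mul_infDist {V P : Type*} [NormedAddCommGroup V]
    [InnerProductSpace ℝ V] [MetricSpace P] [NormedAddTorsor V P] (F : AffineSubspace ℝ P)
    [Nonempty F] [F.direction.HasOrthogonalProjection] {u : V} (hu : u ∈ F.directionᗮ) {f : P} (hf : f ∈ F)
    (q : P) : |⟪u, q -ᵥ f⟫| ≤ ‖u‖ * infDist q F := by
  set π := EuclideanGeometry.orthogonalProjection F q
  have hπ : ⟪u, (π : P) -ᵥ f⟫ = 0 :=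
    Submodule.inner_left_of_mem_orthogonal (AffineSubspace.vsub_mem_direction π.2 hf) hu
  rw [← vsub_add_vsub_cancel q π f, inner_add_right, hπ, add_zero,
    ← EuclideanGeometry.dist_orthogonalProjection_eq_infDist, dist_eq_norm_vsub V]
  exact abs_real_inner_le_norm _ _

section Flats

variable {ι V P : Type*} [Fintype ι] [NormedAddCommGroup V] [InnerProductSpace ℝ V]
  [FiniteDimensional ℝ V] [MetricSpace P] [NormedAddTorsor V P]

noncomputable def medianCost (w : ι → ℝ) (s : ι → P) (F : Set P) : ℝ :=
  ∑ l, w l * infDist (s l) F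

omit [FiniteDimensional ℝ V] in
theorem exists_sum_le_finrank_vectorSpan_flat_sensitivity (w : ι → ℝ) (hw : ∀ i, 0 ≤ w i)
    (s : ι → P) :
    ∃ t : ι → ℝ, (∀ i, 0 ≤ t i) ∧ ∑ i, t i ≤ finrank ℝ (vectorSpan ℝ (Set.range s)) + 1 ∧
      ∀ (F : AffineSubspace ℝ P) [Nonempty F] [F.direction.HasOrthogonalProjection] (i : ι),
        w i * infDist (s i) F ≤ t i * medianCost w s F := by
  obtain ⟨t, ht0, hsum, ht⟩ := exists_sum_le_finrank_vectorSpan_abs_affineMap_le w s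
  refine ⟨t, ht0, hsum, fun F _ _ i => ?_⟩
  obtain ⟨a, hai, ha⟩ := exists_affineMap_eq_infDist_abs_le F (s i)
  calc w i * infDist (s i) F = |w i * a (s i)| := by
        rw [hai, abs_mul, abs_of_nonneg (hw i), abs_of_nonneg infDist_nonneg]
    _ ≤ t i * ∑ l, |w l * a (s l)| := ht a i
    _ ≤ t i * medianCost w s F := by
        refine mul_le_mul_of_nonneg_left (Finset.sum_le_sum fun l _ => ?_) (ht0 i)
        rw [abs_mul, abs_of_nonneg (hw l)]
        exact mul_le_mul_of_nonneg_left (ha _) (hw l)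

theorem medianCost_le_add_sum_mul_dist (w : ι → ℝ) (hw : ∀ i, 0 ≤ w i) (s p : ι → P)
    (F : Set P) : medianCost w p F ≤ medianCost w s F + ∑ l, w l * dist (s l) (p l) := by
  rw [medianCost, medianCost, ← Finset.sum_add_distrib]
  gcongr with l
  rw [← mul_add, dist_comm]
  exact mul_le_mul_of_nonneg_left infDist_le_infDist_add_dist (hw l)

theorem exists_sensitivity_of_le_two_mul_medianCost (w : ι → ℝ) (hw : ∀ i, 0 ≤ w i)
    (s : ι → P) (F₁ : AffineSubspace ℝ P) [Nonempty F₁] (h₁ : 0 < medianCost w s F₁) :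
    ∃ β : ι → ℝ, (∀ i, 0 ≤ β i) ∧ ∑ i, β i ≤ 3 * (finrank ℝ F₁.direction + 1) + 2 ∧
      ∀ (F : AffineSubspace ℝ P) [Nonempty F], medianCost w s F₁ ≤ 2 * medianCost w s F →
        ∀ i, w i * infDist (s i) F ≤ β i * medianCost w s F := by
  set r₁ := medianCost w s F₁
  set p : ι → P := fun l => EuclideanGeometry.orthogonalProjection F₁ (s l)
  have hp : ∀ l, dist (s l) (p l) = infDist (s l) F₁ := fun l =>
    EuclideanGeometry.dist_orthogonalProjection_eq_infDist F₁ (s l)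
  obtain ⟨t, ht0, htsum, ht⟩ := exists_sum_le_finrank_vectorSpan_flat_sensitivity w hw p
  have hspan : (finrank ℝ (vectorSpan ℝ (Set.range p)) : ℝ) ≤ finrank ℝ F₁.direction := by
    rw [F₁.direction_eq_vectorSpan]
    exact_mod_cast Submodule.finrank_mono (vectorSpan_mono ℝ (Set.range_subset_iff.2 fun l =>
      (EuclideanGeometry.orthogonalProjection F₁ (s l)).2))
  have hd : ∀ i, 0 ≤ w i * infDist (s i) F₁ := fun i => mul_nonneg (hw i) infDist_nonneg
  refine ⟨fun i => 2 * (w i * infDist (s i) F₁) / r₁ + 3 * t i,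
    fun i => by have := hd i; have := ht0 i; positivity, ?_, fun F _ hF i => ?_⟩
  · rw [Finset.sum_add_distrib, ← Finset.sum_div, ← Finset.mul_sum, ← Finset.mul_sum,
      show ∑ i, w i * infDist (s i) F₁ = r₁ from rfl, mul_div_assoc, div_self h₁.ne']
    linarith
  have hmove : medianCost w p F ≤ medianCost w s F + r₁ :=
    (medianCost_le_add_sum_mul_dist w hw s p F).trans_eq (by simp only [hp]; rfl)
  have hfar : w i * infDist (s i) F₁ ≤ 2 * (w i * infDist (s i) F₁) / r₁ * medianCost w s F := by
    rw [div_mul_eq_mul_div, le_div_iff₀ h₁]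
    nlinarith [hd i]
  calc w i * infDist (s i) F ≤ w i * infDist (p i) F + w i * infDist (s i) F₁ := by
        rw [← mul_add, ← hp i]
        exact mul_le_mul_of_nonneg_left infDist_le_infDist_add_dist (hw i)
    _ ≤ t i * (3 * medianCost w s F) + 2 * (w i * infDist (s i) F₁) / r₁ * medianCost w s F :=
        add_le_add ((ht F i).trans (mul_le_mul_of_nonneg_left (by linarith) (ht0 i))) hfar
    _ = _ := by ring

theorem exists_pos_le_infDist_of_lt_finrank_vectorSpan (s : ι → P) {j : ℕ}
    (hj : j < finrank ℝ (vectorSpan ℝ (Set.range s))) :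
    ∃ c > 0, ∀ (F : AffineSubspace ℝ P) [Nonempty F], finrank ℝ F.direction ≤ j →
      ∃ l, c ≤ infDist (s l) F := by
  set U := vectorSpan ℝ (Set.range s)
  let Φ : U →ₗ[ℝ] ι × ι → ℝ :=
    LinearMap.pi fun lm => (innerₛₗ ℝ (s lm.1 -ᵥ s lm.2)) ∘ₗ U.subtype
  have hΦ : LinearMap.ker Φ = ⊥ := by
    refine LinearMap.ker_eq_bot'.2 fun u hu => ?_
    have hspan : U ≤ LinearMap.ker (innerₛₗ ℝ (u : V)) := by
      change vectorSpan ℝ _ ≤ _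
      rw [vectorSpan_def, Submodule.span_le]
      rintro _ ⟨_, ⟨l, rfl⟩, _, ⟨m, rfl⟩, rfl⟩
      have := congrFun hu (l, m)
      simpa [Φ, real_inner_comm] using this
    simpa using hspan u.2
  obtain ⟨K, hK, hKΦ⟩ := Φ.exists_antilipschitzWith hΦ
  refine ⟨(2 * (K : ℝ))⁻¹, by positivity, fun F _ hF => ?_⟩
  obtain ⟨u, hu, hu0⟩ : ∃ u : U, (u : V) ∈ F.directionᗮ ∧ u ≠ 0 := by
    have hker : LinearMap.ker (F.direction.orthogonalProjectionOnto ∘ₗ U.subtype) ≠ ⊥ :=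
      LinearMap.ker_ne_bot_of_finrank_lt (hF.trans_lt hj)
    obtain ⟨u, hu, hu0⟩ := Submodule.exists_mem_ne_zero_of_ne_bot hker
    exact ⟨u, Submodule.orthogonalProjectionOnto_eq_zero_iff.1 hu, hu0⟩
  obtain ⟨⟨f, hf⟩⟩ := ‹Nonempty F›
  by_contra! hfar
  have hupos : 0 < ‖u‖ := norm_pos_iff.2 hu0
  have hΦu : ‖Φ u‖ < 2 * (2 * (K : ℝ))⁻¹ * ‖u‖ := by
    refine (pi_norm_lt_iff (by positivity)).2 fun ⟨l, m⟩ => ?_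
    have hlm : Φ u (l, m) = ⟪(u : V), s l -ᵥ f⟫ - ⟪(u : V), s m -ᵥ f⟫ := by
      simp [Φ, ← inner_sub_right, real_inner_comm]
    rw [Real.norm_eq_abs, hlm]
    calc |⟪(u : V), s l -ᵥ f⟫ - ⟪(u : V), s m -ᵥ f⟫|
        ≤ ‖u‖ * infDist (s l) F + ‖u‖ * infDist (s m) F :=
          (abs_sub _ _).trans (add_le_add (abs_inner_vsub_le_norm_mul_infDist F hu hf _)
            (abs_inner_vsub_le_norm_mul_infDist F hu hf _))
      _ < 2 * (2 * (K : ℝ))⁻¹ * ‖u‖ := by nlinarith [hfar l, hfar m]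
  have hK' : (0 : ℝ) < K := hK
  refine lt_irrefl ‖u‖ ?_
  calc ‖u‖ ≤ K * ‖Φ u‖ := ZeroHomClass.bound_of_antilipschitz Φ hKΦ u
    _ < K * (2 * (2 * (K : ℝ))⁻¹ * ‖u‖) := by gcongr
    _ = ‖u‖ := by field_simp

theorem exists_pos_le_medianCost_of_lt_finrank_vectorSpan (w : ι → ℝ) (hw : ∀ i, 0 < w i)
    (s : ι → P) {j : ℕ} (hj : j < finrank ℝ (vectorSpan ℝ (Set.range s))) :
    ∃ c > 0, ∀ (F : AffineSubspace ℝ P) [Nonempty F], finrank ℝ F.direction ≤ j →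
      c ≤ medianCost w s F := by
  have : Nonempty ι := by
    rcases isEmpty_or_nonempty ι with _ | h
    · rw [Set.range_eq_empty, vectorSpan_empty, finrank_bot] at hj
      exact absurd hj (Nat.not_lt_zero j)
    · exact h
  obtain ⟨l₀, hl₀⟩ := Finite.exists_min w
  obtain ⟨c, hc, hfar⟩ := exists_pos_le_infDist_of_lt_finrank_vectorSpan s hj
  refine ⟨w l₀ * c, mul_pos (hw l₀) hc, fun F _ hF => ?_⟩
  obtain ⟨l, hl⟩ := hfar F hF
  calc w l₀ * c ≤ w l * infDist (s l) F := mul_le_mul (hl₀ l) hl hc.le (hw l).le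
    _ ≤ medianCost w s F := Finset.single_le_sum (f := fun l => w l * infDist (s l) F)
        (fun l _ => mul_nonneg (hw l).le infDist_nonneg) (Finset.mem_univ l)

theorem exists_sum_le_flat_sensitivity_of_le_finrank {j : ℕ} (hj : j ≤ finrank ℝ V) (w : ι → ℝ)
    (hw : ∀ i, 0 < w i) (s : ι → P) :
    ∃ t : ι → ℝ, (∀ i, 0 ≤ t i) ∧ ∑ i, t i ≤ 3 * j + 5 ∧
      ∀ (F : AffineSubspace ℝ P) [Nonempty F], finrank ℝ F.direction = j →
        ∀ i, w i * infDist (s i) F ≤ t i * medianCost w s F := by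
  by_cases hs : finrank ℝ (vectorSpan ℝ (Set.range s)) ≤ j
  · obtain ⟨t, ht0, htsum, ht⟩ :=
      exists_sum_le_finrank_vectorSpan_flat_sensitivity w (fun i => (hw i).le) s
    refine ⟨t, ht0, ?_, fun F _ _ => ht F⟩
    have : (finrank ℝ (vectorSpan ℝ (Set.range s)) : ℝ) ≤ j := by exact_mod_cast hs
    linarith
  push Not at hs
  obtain ⟨c, hc, hcost⟩ := exists_pos_le_medianCost_of_lt_finrank_vectorSpan w hw s hs
  set costs := {r | ∃ (F : AffineSubspace ℝ P) (_ : Nonempty F),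
    finrank ℝ F.direction = j ∧ medianCost w s F = r}
  have hne : costs.Nonempty := by
    obtain ⟨f, hf⟩ := exists_linearIndependent_of_le_finrank hj
    obtain ⟨p⟩ := AddTorsor.nonempty (G := V) (P := P)
    refine ⟨_, AffineSubspace.mk' p (Submodule.span ℝ (Set.range f)),
      ⟨⟨p, AffineSubspace.self_mem_mk' _ _⟩⟩, ?_, rfl⟩
    rw [AffineSubspace.direction_mk', finrank_span_eq_card hf, Fintype.card_fin]
  have hbdd : ∀ r ∈ costs, c ≤ r := by
    rintro _ ⟨F, _, hF, rfl⟩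
    exact hcost F hF.le
  have hc₀ : c ≤ sInf costs := le_csInf hne hbdd
  obtain ⟨_, ⟨F₁, _, hF₁, rfl⟩, hlt⟩ :=
    exists_lt_of_csInf_lt hne (show sInf costs < 2 * sInf costs by linarith)
  obtain ⟨β, hβ0, hβsum, hβ⟩ := exists_sensitivity_of_le_two_mul_medianCost w
    (fun i => (hw i).le) s F₁ (hc.trans_le (hcost F₁ hF₁.le))
  refine ⟨β, hβ0, by rw [hF₁] at hβsum; linarith, fun F _ hF => hβ F ?_⟩
  have := csInf_le ⟨c, hbdd⟩ ⟨F, ‹_›, hF, rfl⟩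
  linarith

end Flats

/-- The total sensitivity of the weighted `j`-flat-median problem is `O(j^{3/2})`. -/
theorem stmt8 :
    ∃ C : ℝ, 0 < C ∧
      ∀ (d j n : ℕ) (s : Fin n → EuclideanSpace ℝ (Fin d)) (w : Fin n → ℝ),
        2 ≤ d → 1 ≤ j → j + 1 ≤ d → (∀ i, 0 < w i) →
        (∑ i, sInf {β : ℝ | 0 ≤ β ∧
            ∀ F : Set (EuclideanSpace ℝ (Fin d)), IsJFlat j F →
              w i * Metric.infDist (s i) F ≤ β * ∑ l, w l * Metric.infDist (s l) F})
          ≤ C * (j : ℝ) ^ ((3:ℝ)/2) := by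
  refine ⟨8, by norm_num, fun d j n s w _ hj hjd hw => ?_⟩
  obtain ⟨t, ht0, htsum, ht⟩ := exists_sum_le_flat_sensitivity_of_le_finrank
    (V := EuclideanSpace ℝ (Fin d)) (j := j) (by rw [finrank_euclideanSpace_fin]; omega) w hw s
  have hj' : (1 : ℝ) ≤ j := by exact_mod_cast hj
  refine (Finset.sum_le_sum (g := t) fun i _ => ?_).trans ?_
  · refine csInf_le ⟨0, fun _ hβ => hβ.1⟩ ⟨ht0 i, ?_⟩
    rintro _ ⟨hne, A, rfl, hA⟩
    have : Nonempty A := hne.coe_sort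
    exact ht A hA i
  calc ∑ i, t i ≤ 3 * j + 5 := htsum
    _ ≤ 8 * j := by linarith
    _ ≤ 8 * (j : ℝ) ^ ((3:ℝ)/2) := by
        gcongr
        exact Real.self_le_rpow_of_one_le hj' (by norm_num)
end

section
/- For every integer d ≥ 1 there is a constant C(d) > 0, depending only on d, such that for every k ≥ 1, every ε ∈ (0,1), and every nonempty finite set P ⊆ ℝ^d, there exists a subset S ⊆ P with |S| ≤ C(d)·k·ε^{−d} such that K(P,F) ≤ (1+ε)·K(S,F) for every k-point set F ⊆ ℝ^d; that is, P has an additive ε-coreset of size at most C(d)·k·ε^{−d}. -/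
/-- The `k`-center value `K(P,F) = max_{s ∈ P} min_{f ∈ F} ‖s - f‖` (with `K(∅,F) = 0`). -/
noncomputable def Kval {d : ℕ} (P F : Finset (EuclideanSpace ℝ (Fin d))) : ℝ :=
  maxVal P (fun x => Metric.infDist x (↑F : Set (EuclideanSpace ℝ (Fin d))))

open Metric MeasureTheory Module
open scoped ENNReal NNReal

lemma Finset.exists_subset_isSeparated_isCover {X : Type*} [PseudoEMetricSpace X]
    (P : Finset X) (δ : ℝ≥0) :
    ∃ S ⊆ P, IsSeparated δ (S : Set X) ∧ IsCover δ (P : Set X) S := by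
  have hfin : (maximalSeparatedSet δ (P : Set X)).Finite :=
    P.finite_toSet.subset maximalSeparatedSet_subset
  have hpack : packingNumber δ (P : Set X) ≠ ⊤ :=
    ne_top_of_le_ne_top P.finite_toSet.encard_lt_top.ne (packingNumber_le_encard_self _)
  refine ⟨hfin.toFinset, ?_, ?_, ?_⟩
  · simpa [← Finset.coe_subset] using maximalSeparatedSet_subset
  · simpa using isSeparated_maximalSeparatedSet
  · simpa using isCover_maximalSeparatedSet hpack

lemma Finset.card_le_of_isSeparated_of_subset_closedBall {E : Type*} [NormedAddCommGroup E]
    [NormedSpace ℝ E] [FiniteDimensional ℝ E] {T : Finset E} {c : E} {R : ℝ} {δ : ℝ≥0}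
    (hR : 0 ≤ R) (hδ : 0 < δ) (hTc : (T : Set E) ⊆ closedBall c R)
    (hT : IsSeparated δ (T : Set E)) :
    (T.card : ℝ) ≤ (2 * R / δ + 1) ^ finrank ℝ E := by
  borelize E
  set μ : Measure E := Measure.addHaar
  have hδ' : (0 : ℝ) < δ / 2 := by positivity
  have hdisj : (T : Set E).PairwiseDisjoint (fun t => ball t (δ / 2)) := by
    intro x hx y hy hxy
    refine ball_disjoint_ball ?_
    have : (δ : ℝ≥0∞) < edist x y := hT hx hy hxy
    rw [edist_nndist, ENNReal.coe_lt_coe, ← NNReal.coe_lt_coe, coe_nndist] at this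
    linarith
  have hsub : (⋃ t ∈ T, ball t (δ / 2)) ⊆ ball c (R + δ / 2) :=
    Set.iUnion₂_subset fun t ht => ball_subset_ball' (by linarith [mem_closedBall.mp (hTc ht)])
  have hvol : (T.card : ℝ≥0∞) * ENNReal.ofReal ((δ / 2) ^ finrank ℝ E) * μ (ball 0 1) ≤
      ENNReal.ofReal ((R + δ / 2) ^ finrank ℝ E) * μ (ball 0 1) :=
    calc (T.card : ℝ≥0∞) * ENNReal.ofReal ((δ / 2) ^ finrank ℝ E) * μ (ball 0 1)
        = μ (⋃ t ∈ T, ball t (δ / 2)) := by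
          rw [measure_biUnion_finset hdisj fun t _ => measurableSet_ball]
          simp only [μ.addHaar_ball_of_pos _ hδ', Finset.sum_const, nsmul_eq_mul, mul_assoc]
      _ ≤ μ (ball c (R + δ / 2)) := measure_mono hsub
      _ = ENNReal.ofReal ((R + δ / 2) ^ finrank ℝ E) * μ (ball 0 1) :=
          μ.addHaar_ball_of_pos _ (by positivity)
  have hvol' := (ENNReal.mul_le_mul_iff_left (measure_ball_pos μ _ one_pos).ne'
    measure_ball_lt_top.ne).mp hvol
  have := ENNReal.toReal_le_of_le_ofReal (by positivity) hvol'
  rw [ENNReal.toReal_mul, ENNReal.toReal_natCast, ENNReal.toReal_ofReal (by positivity),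
    ← le_div_iff₀ (by positivity), ← div_pow] at this
  rwa [show (R + δ / 2) / (δ / 2) = 2 * R / δ + 1 by field_simp] at this

lemma Finset.card_le_of_isSeparated_of_subset_biUnion_closedBall {E : Type*}
    [NormedAddCommGroup E] [NormedSpace ℝ E] [FiniteDimensional ℝ E] {S F : Finset E} {R : ℝ}
    {δ : ℝ≥0} (hR : 0 ≤ R) (hδ : 0 < δ) (hSF : (S : Set E) ⊆ ⋃ f ∈ F, closedBall f R)
    (hS : IsSeparated δ (S : Set E)) :
    (S.card : ℝ) ≤ F.card * (2 * R / δ + 1) ^ finrank ℝ E := by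
  classical
  have hcover : S ⊆ F.biUnion fun f => S.filter (· ∈ closedBall f R) := by
    intro s hs
    obtain ⟨f, hf, hsf⟩ := Set.mem_iUnion₂.mp (hSF hs)
    exact Finset.mem_biUnion.mpr ⟨f, hf, Finset.mem_filter.mpr ⟨hs, hsf⟩⟩
  calc (S.card : ℝ) ≤ ∑ f ∈ F, ((S.filter (· ∈ closedBall f R)).card : ℝ) := by
        exact_mod_cast (Finset.card_le_card hcover).trans Finset.card_biUnion_le
    _ ≤ F.card * (2 * R / δ + 1) ^ finrank ℝ E := by
        rw [← nsmul_eq_mul]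
        refine Finset.sum_le_card_nsmul _ _ _ fun f _ => ?_
        exact Finset.card_le_of_isSeparated_of_subset_closedBall hR hδ
          (fun x hx => (Finset.mem_filter.mp hx).2)
          (hS.subset (Finset.coe_subset.mpr (Finset.filter_subset _ _)))

section Kval

variable {d : ℕ} {P S F : Finset (EuclideanSpace ℝ (Fin d))}

lemma Kval_nonneg (P F : Finset (EuclideanSpace ℝ (Fin d))) : 0 ≤ Kval P F :=
  Finset.le_fold_max _ |>.mpr (Or.inl le_rfl)

lemma infDist_le_Kval {x : EuclideanSpace ℝ (Fin d)} (hx : x ∈ P) :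
    infDist x (F : Set _) ≤ Kval P F :=
  Finset.le_fold_max _ |>.mpr (Or.inr ⟨x, hx, le_rfl⟩)

lemma Kval_le {a : ℝ} (ha : 0 ≤ a) (h : ∀ x ∈ P, infDist x (F : Set _) ≤ a) : Kval P F ≤ a :=
  Finset.fold_max_le _ |>.mpr ⟨ha, h⟩

lemma Kval_le_Kval_add_of_isCover {δ : ℝ≥0}
    (hSP : IsCover δ (P : Set (EuclideanSpace ℝ (Fin d))) ↑S) :
    Kval P F ≤ Kval S F + δ := by
  refine Kval_le (by positivity [Kval_nonneg S F]) fun p hp => ?_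
  obtain ⟨s, hs, hps⟩ := hSP hp
  have hps : dist p s ≤ δ := by exact_mod_cast edist_le_coe.mp hps
  calc infDist p (F : Set _) ≤ infDist s (F : Set _) + dist p s := infDist_le_infDist_add_dist
    _ ≤ Kval S F + δ := add_le_add (infDist_le_Kval hs) hps

lemma subset_biUnion_closedBall_Kval (hF : F.Nonempty) :
    (P : Set _) ⊆ ⋃ f ∈ F, closedBall f (Kval P F) := by
  intro p hp
  obtain ⟨f, hf, hpf⟩ := F.finite_toSet.isCompact.exists_infDist_eq_dist hF p
  exact Set.mem_iUnion₂.mpr ⟨f, hf, by rw [mem_closedBall, ← hpf]; exact infDist_le_Kval hp⟩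

lemma subset_of_Kval_eq_zero (hF : F.Nonempty) (h : Kval P F = 0) : P ⊆ F := by
  intro p hp
  obtain ⟨f, hf, hpf⟩ := Set.mem_iUnion₂.mp (subset_biUnion_closedBall_Kval hF hp)
  rw [h, closedBall_zero, Set.mem_singleton_iff] at hpf
  exact hpf ▸ hf

lemma Kval_image_le_two_mul {g : EuclideanSpace ℝ (Fin d) → EuclideanSpace ℝ (Fin d)}
    (hg : ∀ f, ∀ p ∈ P, dist f (g f) ≤ dist f p) (hF : F.Nonempty) :
    Kval P (F.image g) ≤ 2 * Kval P F := by
  classical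
  refine Kval_le (by positivity [Kval_nonneg P F]) fun p hp => ?_
  obtain ⟨f, hf, hpf⟩ := F.finite_toSet.isCompact.exists_infDist_eq_dist hF p
  calc infDist p ((F.image g : Finset _) : Set _) ≤ dist p (g f) :=
        infDist_le_dist_of_mem (by simpa using ⟨f, hf, rfl⟩)
    _ ≤ dist p f + dist f (g f) := dist_triangle _ _ _
    _ ≤ 2 * infDist p (F : Set _) := by linarith [hg f p hp, dist_comm p f]
    _ ≤ 2 * Kval P F := by linarith [infDist_le_Kval (F := F) hp]

lemma exists_subset_Kval_le_two_mul (hP : P.Nonempty) {k : ℕ} (hk : 1 ≤ k) :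
    ∃ F₀ ⊆ P, F₀.Nonempty ∧ F₀.card ≤ k ∧
      ∀ F : Finset (EuclideanSpace ℝ (Fin d)), F.card = k → Kval P F₀ ≤ 2 * Kval P F := by
  classical
  set candidates := P.powerset.filter fun F₀ => F₀.Nonempty ∧ F₀.card ≤ k
  have mem_candidates {F₀} : F₀ ∈ candidates ↔ F₀ ⊆ P ∧ F₀.Nonempty ∧ F₀.card ≤ k := by
    simp [candidates]
  obtain ⟨p, hp⟩ := hP
  obtain ⟨F₀, hF₀, hmin⟩ := candidates.exists_min_image (Kval P)
    ⟨{p}, mem_candidates.mpr ⟨by simpa using hp, by simp, by simpa using hk⟩⟩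
  obtain ⟨hF₀P, hF₀ne, hF₀k⟩ := mem_candidates.mp hF₀
  refine ⟨F₀, hF₀P, hF₀ne, hF₀k, fun F hFk => ?_⟩
  choose g hgP hg using fun f : EuclideanSpace ℝ (Fin d) => P.exists_min_image (dist f) ⟨p, hp⟩
  have hF : F.Nonempty := Finset.card_pos.mp (by omega)
  have hgF : F.image g ∈ candidates := mem_candidates.mpr
    ⟨by simpa [Finset.image_subset_iff] using fun f _ => hgP f, hF.image g,
      Finset.card_image_le.trans hFk.le⟩
  exact (hmin _ hgF).trans (Kval_image_le_two_mul hg hF)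

lemma exists_subset_card_le_Kval_le_add {F₀ : Finset (EuclideanSpace ℝ (Fin d))}
    (hF₀ : F₀.Nonempty) (hr : 0 < Kval P F₀) {ε : ℝ} (hε : 0 < ε) (hε1 : ε ≤ 1) :
    ∃ S ⊆ P, (S.card : ℝ) ≤ F₀.card * (9 * ε⁻¹) ^ d ∧
      ∀ F : Finset (EuclideanSpace ℝ (Fin d)), Kval P F ≤ Kval S F + ε / 4 * Kval P F₀ := by
  set r := Kval P F₀
  set δ : ℝ≥0 := ⟨ε / 4 * r, by positivity⟩
  have hδ : (δ : ℝ) = ε / 4 * r := rfl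
  obtain ⟨S, hSP, hS, hPS⟩ := P.exists_subset_isSeparated_isCover δ
  refine ⟨S, hSP, ?_, fun F => hδ ▸ Kval_le_Kval_add_of_isCover hPS⟩
  have hcard := Finset.card_le_of_isSeparated_of_subset_biUnion_closedBall hr.le
    (NNReal.coe_pos.mp (by rw [hδ]; positivity))
    ((Finset.coe_subset.mpr hSP).trans (subset_biUnion_closedBall_Kval hF₀)) hS
  have hratio : 2 * r / δ + 1 ≤ 9 * ε⁻¹ := by
    rw [hδ, show 2 * r / (ε / 4 * r) = 8 * ε⁻¹ by field_simp; norm_num]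
    linarith [one_le_inv₀ hε |>.mpr hε1]
  rw [finrank_euclideanSpace_fin] at hcard
  exact hcard.trans (by gcongr)

end Kval

/-- Every finite point set in `ℝ^d` has an additive `ε`-coreset for `k`-center
of size at most `C(d)·k·ε^{-d}`. -/
theorem stmt15 :
    ∀ d : ℕ, 1 ≤ d →
      ∃ C : ℝ, 0 < C ∧
        ∀ (k : ℕ) (ε : ℝ) (P : Finset (EuclideanSpace ℝ (Fin d))),
          1 ≤ k → 0 < ε → ε < 1 → P.Nonempty →
          ∃ S ⊆ P, ((S.card : ℝ) ≤ C * k * ε⁻¹ ^ d) ∧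
            ∀ F : Finset (EuclideanSpace ℝ (Fin d)), F.card = k →
              Kval P F ≤ (1 + ε) * Kval S F := by
  intro d _
  refine ⟨9 ^ d, by positivity, fun k ε P hk hε hε1 hP => ?_⟩
  obtain ⟨F₀, -, hF₀, hF₀k, hF₀opt⟩ := exists_subset_Kval_le_two_mul hP hk
  have hF₀k' : (F₀.card : ℝ) ≤ k := mod_cast hF₀k
  rcases (Kval_nonneg P F₀).eq_or_lt with hr | hr
  · refine ⟨P, subset_rfl, ?_, fun F _ => le_mul_of_one_le_left (Kval_nonneg P F) (by linarith)⟩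
    have hPF₀ : (P.card : ℝ) ≤ F₀.card := mod_cast
      Finset.card_le_card (subset_of_Kval_eq_zero hF₀ hr.symm)
    have hC : (1 : ℝ) ≤ 9 ^ d * ε⁻¹ ^ d := one_le_mul_of_one_le_of_one_le
      (one_le_pow₀ (by norm_num)) (one_le_pow₀ (one_le_inv₀ hε |>.mpr hε1.le))
    nlinarith
  · obtain ⟨S, hSP, hcard, hPS⟩ := exists_subset_card_le_Kval_le_add hF₀ hr hε hε1.le
    refine ⟨S, hSP, ?_, fun F hF => ?_⟩
    · calc (S.card : ℝ) ≤ F₀.card * (9 * ε⁻¹) ^ d := hcard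
        _ ≤ k * (9 * ε⁻¹) ^ d := by gcongr
        _ = 9 ^ d * k * ε⁻¹ ^ d := by ring
    · have hPF : Kval P F ≤ Kval S F + ε / 2 * Kval P F := by
        nlinarith [hPS F, mul_le_mul_of_nonneg_left (hF₀opt F hF) hε.le]
      nlinarith [mul_le_mul_of_nonneg_left hPF (by linarith : 0 ≤ 1 + ε),
        mul_nonneg (mul_nonneg hε.le (sub_nonneg.mpr hε1.le)) (Kval_nonneg P F)]
end
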